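/- (Two-sided Lyapunov inequality underlying Theorem 4.7(1)) Let d = 1, let Q^{(0)} and Q^{(m+1)} be conservative Q-matrices on S, and suppose Q(x) = Q^{(0)} for all x < α0 and Q(x) = Q^{(m+1)} for all x ≥ α_m, where α0 < α_m are reals. Suppose ρ, h : ℝ → (0,∞) are twice continuously differentiable, there exist r0 > 0 and β ∈ ℝ^N with ℒ^{(i)}ρ(x) ≤ β_i h(x) for all |x| > r0 and i ∈ S, and ℒ^{(i)}h(x)/h(x) → 0 as |x| → ∞ for every i ∈ S. Suppose there exist c > 0, c̃ > 0 and vectors ξ, ξ̃ ∈ ℝ^N with all entries strictly positive such that (Q^{(m+1)}ξ)_i = −c − β_i and (Q^{(0)}ξ̃)_i = −c̃ − β_i for every i ∈ S. Define V(x,i) = ρ(x) + ξ̃_i h(x) for x < α0 − 1 and V(x,i) = ρ(x) + ξ_i h(x) for x > α_m + 1. Then there exists r1 > max(r0, |α0| + 1, |α_m| + 1) such that 𝒜V(x,i) ≤ −(min(c, c̃)/2) h(x) < 0 for all |x| > r1 and all i ∈ S. -/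

import Mathlib

open scoped BigOperators
open Filter

/-- The one-dimensional diffusion generator
`ℒ^{(i)}f(x) = b(x,i) f'(x) + (1/2) a(x,i) f''(x)` in a fixed environment. -/
noncomputable def diffGen1 (b a : ℝ → ℝ) (f : ℝ → ℝ) (x : ℝ) : ℝ :=
  b x * deriv f x + (1 / 2) * a x * deriv (deriv f) x

/-- The full generator of the one-dimensional regime-switching diffusion:
`𝒜V(x,i) = ℒ^{(i)}V(·,i)(x) + Σ_{j≠i} q_{ij}(x)(V(x,j) − V(x,i))`. -/
noncomputable def hybridGen1 {N : ℕ}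
    (b a : ℝ → Fin N → ℝ)
    (Q : ℝ → Matrix (Fin N) (Fin N) ℝ)
    (V : ℝ → Fin N → ℝ) (x : ℝ) (i : Fin N) : ℝ :=
  diffGen1 (fun z => b z i) (fun z => a z i) (fun z => V z i) x +
    ∑ j ∈ Finset.univ.erase i, Q x i j * (V x j - V x i)

/-! Beyond `|x| > max(|α0|, |α_m|) + 1` the rate matrix is constant and `V(·,j) = ρ + ξ_j h` near
`x` (with `ξ̃`, `c̃` on the left), so, the rows of `Q` summing to zero,
`𝒜V(x,i) = ℒ^{(i)}ρ + ξ_i ℒ^{(i)}h + (Qξ)_i h ≤ −c h + ξ_i ℒ^{(i)}h`.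
Since `ℒ^{(i)}h / h → 0`, the last term is eventually at most `(min(c,c̃)/2) h`. -/

lemma Matrix.sum_erase_mul_sub_eq_mulVec {ι R : Type*} [Fintype ι] [DecidableEq ι] [CommRing R]
    (A : Matrix ι ι R) (v : ι → R) {i : ι} (hrow : ∑ j, A i j = 0) :
    ∑ j ∈ Finset.univ.erase i, A i j * (v j - v i) = A.mulVec v i := by
  rw [Finset.sum_erase _ (by simp), Matrix.mulVec, dotProduct]
  simp only [mul_sub, Finset.sum_sub_distrib, ← Finset.sum_mul, hrow, zero_mul, sub_zero]

lemma deriv_add_const_mul {f g : ℝ → ℝ} (hf : Differentiable ℝ f) (hg : Differentiable ℝ g)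
    (k : ℝ) : deriv (fun z => f z + k * g z) = fun z => deriv f z + k * deriv g z := by
  funext z
  rw [deriv_fun_add (hf z) ((hg z).const_mul k), deriv_const_mul k (hg z)]

lemma ContDiff.differentiable_deriv_of_two {f : ℝ → ℝ} (hf : ContDiff ℝ 2 f) :
    Differentiable ℝ (deriv f) :=
  (hf.deriv' (n := 1)).differentiable one_ne_zero

lemma diffGen1_congr {b a f g : ℝ → ℝ} {x : ℝ} (hfg : f =ᶠ[nhds x] g) :
    diffGen1 b a f x = diffGen1 b a g x := by
  rw [diffGen1, diffGen1, hfg.deriv_eq, hfg.deriv.deriv_eq]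

lemma diffGen1_add_const_mul (b a : ℝ → ℝ) {ρ h : ℝ → ℝ}
    (hρ : ContDiff ℝ 2 ρ) (hh : ContDiff ℝ 2 h) (k x : ℝ) :
    diffGen1 b a (fun z => ρ z + k * h z) x = diffGen1 b a ρ x + k * diffGen1 b a h x := by
  rw [diffGen1, deriv_add_const_mul (hρ.differentiable two_ne_zero)
    (hh.differentiable two_ne_zero), deriv_add_const_mul hρ.differentiable_deriv_of_two
    hh.differentiable_deriv_of_two, diffGen1, diffGen1]
  ring

lemma hybridGen1_eq_of_eventuallyEq {N : ℕ} {b a : ℝ → Fin N → ℝ}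
    {Q : ℝ → Matrix (Fin N) (Fin N) ℝ} {V : ℝ → Fin N → ℝ} {x : ℝ} {i : Fin N}
    {Q' : Matrix (Fin N) (Fin N) ℝ} (hQx : Q x = Q') (hrow : ∑ j, Q' i j = 0)
    {ρ h : ℝ → ℝ} (hρ : ContDiff ℝ 2 ρ) (hh : ContDiff ℝ 2 h) {ξ : Fin N → ℝ}
    (hV : ∀ᶠ y in nhds x, ∀ j, V y j = ρ y + ξ j * h y) :
    hybridGen1 b a Q V x i
      = diffGen1 (fun z => b z i) (fun z => a z i) ρ x
        + ξ i * diffGen1 (fun z => b z i) (fun z => a z i) h x + Q'.mulVec ξ i * h x := by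
  have hVx : ∀ j, V x j = ρ x + ξ j * h x := hV.self_of_nhds
  have hjump : ∑ j ∈ Finset.univ.erase i, Q x i j * (V x j - V x i)
      = ∑ j ∈ Finset.univ.erase i, Q' i j * (ξ j - ξ i) * h x :=
    Finset.sum_congr rfl fun j _ => by rw [hVx, hVx, hQx]; ring
  rw [hybridGen1, diffGen1_congr (hV.mono fun y hy => hy i), diffGen1_add_const_mul _ _ hρ hh,
    hjump, ← Finset.sum_mul, Q'.sum_erase_mul_sub_eq_mulVec ξ hrow]

lemma hybridGen1_le_of_mulVec_eq {N : ℕ} {b a : ℝ → Fin N → ℝ}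
    {Q : ℝ → Matrix (Fin N) (Fin N) ℝ} {V : ℝ → Fin N → ℝ} {x : ℝ} {i : Fin N}
    {Q' : Matrix (Fin N) (Fin N) ℝ} (hQx : Q x = Q') (hrow : ∑ j, Q' i j = 0)
    {ρ h : ℝ → ℝ} (hρ : ContDiff ℝ 2 ρ) (hh : ContDiff ℝ 2 h) {ξ β : Fin N → ℝ} {c δ : ℝ}
    (hV : ∀ᶠ y in nhds x, ∀ j, V y j = ρ y + ξ j * h y)
    (hLρ : diffGen1 (fun z => b z i) (fun z => a z i) ρ x ≤ β i * h x)
    (hLh : ξ i * diffGen1 (fun z => b z i) (fun z => a z i) h x ≤ δ * h x)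
    (hfred : Q'.mulVec ξ i = -c - β i) :
    hybridGen1 b a Q V x i ≤ -(c - δ) * h x := by
  rw [hybridGen1_eq_of_eventuallyEq hQx hrow hρ hh hV, hfred]
  linarith

lemma eventually_forall_mul_le_of_tendsto_div {ι : Type*} [Finite ι] {l : Filter ℝ}
    {g : ι → ℝ → ℝ} {h : ℝ → ℝ} (hh : ∀ x, 0 < h x)
    (hg : ∀ i, Tendsto (fun x => g i x / h x) l (nhds 0)) (ξ : ι → ℝ) {δ : ℝ} (hδ : 0 < δ) :
    ∀ᶠ x in l, ∀ i, ξ i * g i x ≤ δ * h x := by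
  refine eventually_all.mpr fun i => ?_
  have hlim : Tendsto (fun x => ξ i * (g i x / h x)) l (nhds 0) := by
    simpa using (hg i).const_mul (ξ i)
  filter_upwards [hlim.eventually (gt_mem_nhds hδ)] with x hx
  rw [← mul_div_assoc, div_lt_iff₀ (hh x)] at hx
  exact hx.le

lemma exists_gt_forall_abs_gt_of_eventually {P : ℝ → Prop}
    (hP : ∀ᶠ x in comap (fun x : ℝ => |x|) atTop, P x) (r : ℝ) :
    ∃ r1, r < r1 ∧ ∀ x, r1 < |x| → P x := by
  obtain ⟨R, hR⟩ := eventually_atTop.mp (eventually_comap.mp hP)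
  exact ⟨max r R + 1, by linarith [le_max_left r R],
    fun x hx => hR |x| (by linarith [le_max_right r R]) x rfl⟩

lemma lt_or_lt_of_max_abs_add_one_lt {a b x : ℝ} (hx : max (|a| + 1) (|b| + 1) < |x|) :
    b + 1 < x ∨ x < a - 1 := by
  rw [max_lt_iff] at hx
  rcases le_or_gt 0 x with hx0 | hx0
  · rw [abs_of_nonneg hx0] at hx
    exact Or.inl (by linarith [le_abs_self b])
  · rw [abs_of_neg hx0] at hx
    exact Or.inr (by linarith [neg_abs_le a])

theorem lyapunov_two_sided_ergodicity_general
    (N : ℕ) (b a : ℝ → Fin N → ℝ)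
    (Q : ℝ → Matrix (Fin N) (Fin N) ℝ)
    (Q0 Qm : Matrix (Fin N) (Fin N) ℝ)
    (hQ0row : ∀ i, ∑ j, Q0 i j = 0)
    (hQmrow : ∀ i, ∑ j, Qm i j = 0)
    (α0 αm : ℝ)
    (hQeq0 : ∀ x : ℝ, x < α0 → Q x = Q0)
    (hQeqm : ∀ x : ℝ, αm ≤ x → Q x = Qm)
    (ρ h : ℝ → ℝ)
    (hhpos : ∀ x, 0 < h x)
    (hρC2 : ContDiff ℝ 2 ρ) (hhC2 : ContDiff ℝ 2 h)
    (r0 : ℝ)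
    (β : Fin N → ℝ)
    (hL : ∀ x : ℝ, r0 < |x| → ∀ i,
      diffGen1 (fun z => b z i) (fun z => a z i) ρ x ≤ β i * h x)
    (hLh : ∀ i, Tendsto (fun x => diffGen1 (fun z => b z i) (fun z => a z i) h x / h x)
      (Filter.comap (fun x : ℝ => |x|) Filter.atTop) (nhds 0))
    (c ct : ℝ) (hc : 0 < c) (hct : 0 < ct)
    (ξ ξt : Fin N → ℝ)
    (hfredm : ∀ i, Qm.mulVec ξ i = -c - β i)
    (hfred0 : ∀ i, Q0.mulVec ξt i = -ct - β i)
    (V : ℝ → Fin N → ℝ)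
    (hVleft : ∀ x : ℝ, x < α0 - 1 → ∀ i, V x i = ρ x + ξt i * h x)
    (hVright : ∀ x : ℝ, αm + 1 < x → ∀ i, V x i = ρ x + ξ i * h x) :
    ∃ r1 : ℝ, max r0 (max (|α0| + 1) (|αm| + 1)) < r1 ∧
      ∀ x : ℝ, r1 < |x| → ∀ i,
        hybridGen1 b a Q V x i ≤ -(min c ct / 2) * h x ∧
        -(min c ct / 2) * h x < 0 := by
  have hm : 0 < min c ct := lt_min hc hct
  obtain ⟨r1, hr1, hsmall⟩ := exists_gt_forall_abs_gt_of_eventually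
    ((eventually_forall_mul_le_of_tendsto_div hhpos hLh ξ (half_pos hm)).and
      (eventually_forall_mul_le_of_tendsto_div hhpos hLh ξt (half_pos hm)))
    (max r0 (max (|α0| + 1) (|αm| + 1)))
  refine ⟨r1, hr1, fun x hx i => ⟨?_, by nlinarith [hhpos x]⟩⟩
  have hxr := max_lt_iff.mp (hr1.trans hx)
  rcases lt_or_lt_of_max_abs_add_one_lt hxr.2 with hright | hleft
  · have hA := hybridGen1_le_of_mulVec_eq (hQeqm x (by linarith)) (hQmrow i) hρC2 hhC2
      ((eventually_gt_nhds hright).mono fun y hy => hVright y hy) (hL x hxr.1 i)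
      ((hsmall x hx).1 i) (hfredm i)
    nlinarith [min_le_left c ct, hhpos x]
  · have hA := hybridGen1_le_of_mulVec_eq (hQeq0 x (by linarith)) (hQ0row i) hρC2 hhC2
      ((eventually_lt_nhds hleft).mono fun y hy => hVleft y hy) (hL x hxr.1 i)
      ((hsmall x hx).2 i) (hfred0 i)
    nlinarith [min_le_right c ct, hhpos x]

/-- (Two-sided Lyapunov inequality underlying Theorem 4.7(1)): with
`Q(x) = Q^{(0)}` for `x < α0` and `Q(x) = Q^{(m+1)}` for `x ≥ α_m`,
`ℒ^{(i)}ρ ≤ β_i h` for `|x| > r0`, `ℒ^{(i)}h/h → 0` as `|x| → ∞`, and Fredholm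
solutions `(Q^{(m+1)}ξ)_i = −c − β_i`, `(Q^{(0)}ξ̃)_i = −c̃ − β_i` with
`ξ, ξ̃ ≫ 0`, any `C²` function `V` with `V(x,i) = ρ(x) + ξ̃_i h(x)` for
`x < α0 − 1` and `V(x,i) = ρ(x) + ξ_i h(x)` for `x > α_m + 1` satisfies
`𝒜V(x,i) ≤ −(min(c,c̃)/2) h(x) < 0` for all `|x| > r1` for some
`r1 > max(r0, |α0|+1, |α_m|+1)`. -/
theorem lyapunov_two_sided_ergodicity
    (N : ℕ) (hN : 1 ≤ N)
    (b a : ℝ → Fin N → ℝ)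
    (ha : ∀ x i, 0 ≤ a x i)
    (Q : ℝ → Matrix (Fin N) (Fin N) ℝ)
    (hQoff : ∀ x i j, i ≠ j → 0 ≤ Q x i j)
    (hQrow : ∀ x i, ∑ j, Q x i j = 0)
    (Q0 Qm : Matrix (Fin N) (Fin N) ℝ)
    (hQ0off : ∀ i j, i ≠ j → 0 ≤ Q0 i j) (hQ0row : ∀ i, ∑ j, Q0 i j = 0)
    (hQmoff : ∀ i j, i ≠ j → 0 ≤ Qm i j) (hQmrow : ∀ i, ∑ j, Qm i j = 0)
    (α0 αm : ℝ) (hα : α0 < αm)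
    (hQeq0 : ∀ x : ℝ, x < α0 → Q x = Q0)
    (hQeqm : ∀ x : ℝ, αm ≤ x → Q x = Qm)
    (ρ h : ℝ → ℝ)
    (hρpos : ∀ x, 0 < ρ x) (hhpos : ∀ x, 0 < h x)
    (hρC2 : ContDiff ℝ 2 ρ) (hhC2 : ContDiff ℝ 2 h)
    (r0 : ℝ) (hr0 : 0 < r0)
    (β : Fin N → ℝ)
    (hL : ∀ x : ℝ, r0 < |x| → ∀ i,
      diffGen1 (fun z => b z i) (fun z => a z i) ρ x ≤ β i * h x)
    (hLh : ∀ i, Tendsto (fun x => diffGen1 (fun z => b z i) (fun z => a z i) h x / h x)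
      (Filter.comap (fun x : ℝ => |x|) Filter.atTop) (nhds 0))
    (c ct : ℝ) (hc : 0 < c) (hct : 0 < ct)
    (ξ ξt : Fin N → ℝ) (hξ : ∀ i, 0 < ξ i) (hξt : ∀ i, 0 < ξt i)
    (hfredm : ∀ i, Qm.mulVec ξ i = -c - β i)
    (hfred0 : ∀ i, Q0.mulVec ξt i = -ct - β i)
    (V : ℝ → Fin N → ℝ)
    (hVC2 : ∀ i, ContDiff ℝ 2 (fun x => V x i))
    (hVleft : ∀ x : ℝ, x < α0 - 1 → ∀ i, V x i = ρ x + ξt i * h x)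
    (hVright : ∀ x : ℝ, αm + 1 < x → ∀ i, V x i = ρ x + ξ i * h x) :
    ∃ r1 : ℝ, max r0 (max (|α0| + 1) (|αm| + 1)) < r1 ∧
      ∀ x : ℝ, r1 < |x| → ∀ i,
        hybridGen1 b a Q V x i ≤ -(min c ct / 2) * h x ∧
        -(min c ct / 2) * h x < 0 :=
  lyapunov_two_sided_ergodicity_general N b a Q Q0 Qm hQ0row hQmrow α0 αm hQeq0 hQeqm ρ h hhpos hρC2
    hhC2 r0 β hL hLh c ct hc hct ξ ξt hfredm hfred0 V hVleft hVright
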